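/- arXiv:2303.01025 — 5 statements merged into one kernel-verified Lean document; each statement's English description precedes it below -/
import Mathlib

section
/- Let α, β : ℝ → ℝ be smooth compactly supported functions with supp(α) ⊆ (1,2) and supp(β) ⊆ (3,4), and suppose neither α nor β is identically zero. Define V⁺(x) = x² + α(x) + β(x) and V⁻(x) = x² + α(x) + β(−x). Then V⁺ and V⁻ are non-isometric: for every c ∈ ℝ and every σ ∈ {+1,−1} there exists x ∈ ℝ with V⁺(x) ≠ V⁻(σx + c). -/
open Set

/-- If `α, β` are smooth compactly supported functions with
`supp α ⊆ (1,2)`, `supp β ⊆ (3,4)`, neither identically zero, then the potentials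
`V⁺(x) = x² + α(x) + β(x)` and `V⁻(x) = x² + α(x) + β(−x)` are non-isometric:
no isometry `x ↦ σx + c` of `ℝ` carries one to the other. -/
theorem nonisometric_potentials
    (α β : ℝ → ℝ)
    (hα : ContDiff ℝ (⊤ : ℕ∞) α) (hαc : HasCompactSupport α)
    (hβ : ContDiff ℝ (⊤ : ℕ∞) β) (hβc : HasCompactSupport β)
    (hαsupp : tsupport α ⊆ Set.Ioo 1 2) (hβsupp : tsupport β ⊆ Set.Ioo 3 4)
    (hαne : α ≠ 0) (hβne : β ≠ 0)
    (Vp Vm : ℝ → ℝ)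
    (hVp : ∀ x, Vp x = x ^ 2 + α x + β x)
    (hVm : ∀ x, Vm x = x ^ 2 + α x + β (-x)) :
    ∀ c : ℝ, ∀ σ : ℝ, (σ = 1 ∨ σ = -1) →
      ∃ x : ℝ, Vp x ≠ Vm (σ * x + c) := by
  intro c σ hσ
  by_contra h
  push_neg at h
  have hσ2 : σ * σ = 1 := by rcases hσ with h'|h' <;> simp [h']
  have hzα : ∀ x : ℝ, x ∉ Set.Ioo (1:ℝ) 2 → α x = 0 := fun x hx =>
    image_eq_zero_of_notMem_tsupport (fun hm => hx (hαsupp hm))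
  have hzβ : ∀ x : ℝ, x ∉ Set.Ioo (3:ℝ) 4 → β x = 0 := fun x hx =>
    image_eq_zero_of_notMem_tsupport (fun hm => hx (hβsupp hm))
  have key : ∀ x : ℝ, α x + β x =
      (σ*x+c)^2 - x^2 + α (σ*x+c) + β (-(σ*x+c)) := by
    intro x
    have hx := h x
    rw [hVp, hVm] at hx
    linarith
  -- for large x all the compactly supported terms vanish
  have big : ∀ x : ℝ, |c| + 4 ≤ x → 2*σ*c*x + c^2 = 0 := by
    intro x hx
    have hc1 : -|c| ≤ c := neg_abs_le c
    have hc2 : c ≤ |c| := le_abs_self c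
    have hxa : α x = 0 := hzα x (by intro hm; nlinarith [abs_nonneg c, hm.2])
    have hxb : β x = 0 := hzβ x (by intro hm; nlinarith [abs_nonneg c, hm.2])
    have hya : α (σ*x+c) = 0 := by
      apply hzα; intro hm
      rcases hσ with h'|h' <;> subst h'
      · linarith [hm.2]
      · linarith [hm.1]
    have hyb : β (-(σ*x+c)) = 0 := by
      apply hzβ; intro hm
      rcases hσ with h'|h' <;> subst h'
      · linarith [hm.1]
      · linarith [hm.2]
    have := key x
    rw [hxa, hxb, hya, hyb] at this
    nlinarith [this]
  have hc0 : c = 0 := by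
    have e1 := big (|c| + 4) le_rfl
    have e2 := big (|c| + 5) (by linarith)
    have hσc : σ * c = 0 := by nlinarith
    rcases hσ with h'|h' <;> subst h' <;> linarith [hσc] <;> nlinarith
  subst hc0
  have key' : ∀ x : ℝ, α x + β x = α (σ*x) + β (-(σ*x)) := by
    intro x
    have := key x
    have hsq : (σ*x+0)^2 = (σ*σ)*x^2 := by ring
    rw [hsq, hσ2, one_mul, add_zero] at this
    linarith
  rcases hσ with h'|h' <;> subst h'
  · -- σ = 1 : β is even, contradiction
    apply hβne
    funext x
    show β x = 0
    by_contra hx0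
    have hxs : x ∈ Set.Ioo (3:ℝ) 4 := hβsupp (subset_tsupport β hx0)
    have := key' x
    rw [one_mul] at this
    have hb : β (-x) = 0 := hzβ (-x) (by intro hm; linarith [hm.1, hxs.1])
    simp only [hb] at this
    exact hx0 (by linarith)
  · -- σ = -1 : α is even, contradiction
    apply hαne
    funext x
    show α x = 0
    by_contra hx0
    have hxs : x ∈ Set.Ioo (1:ℝ) 2 := hαsupp (subset_tsupport α hx0)
    have := key' x
    have hneg : -(-1 * x) = x := by ring
    rw [hneg] at this
    have ha : α (-1 * x) = 0 := hzα (-1*x) (by intro hm; simp at hm; linarith [hm.1, hxs.1])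
    simp only [ha] at this
    exact hx0 (by linarith)
end

section
/- For every integer j ≥ 1, every real root r of the physicist's Hermite polynomial P_j satisfies |r| ≤ √(2j−2); moreover, for j ≥ 2 the sharper bound |r| ≤ √((j−2)/2) + √((j−1)/2) holds. -/
/-- The physicist's Hermite polynomials, as functions on `ℝ`:
`P₀ = 1`, `P₁ = 2x`, `P_{j+2}(x) = 2x·P_{j+1}(x) − 2(j+1)·P_j(x)`. -/
noncomputable def hermiteP : ℕ → ℝ → ℝ
  | 0 => fun _ => 1
  | 1 => fun x => 2 * x
  | (j + 2) => fun x => 2 * x * hermiteP (j + 1) x - 2 * ((j : ℝ) + 1) * hermiteP j x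

lemma hermiteP_rec (j : ℕ) (x : ℝ) :
    hermiteP (j+2) x = 2 * x * hermiteP (j + 1) x - 2 * ((j : ℝ) + 1) * hermiteP j x := rfl

lemma hermiteP_neg : ∀ (j : ℕ) (x : ℝ), hermiteP j (-x) = (-1)^j * hermiteP j x
  | 0, x => by simp [hermiteP]
  | 1, x => by simp [hermiteP]
  | (j+2), x => by
    have h1 := hermiteP_neg (j+1) x
    have h2 := hermiteP_neg j x
    simp only [hermiteP, h1, h2]
    ring

lemma sqrt_four : Real.sqrt 4 = 2 := by
  rw [show (4:ℝ) = 2^2 by norm_num, Real.sqrt_sq (by norm_num : (0:ℝ) ≤ 2)]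

lemma sqrt_double (c : ℝ) : Real.sqrt (4 * c) = 2 * Real.sqrt c := by
  rw [Real.sqrt_mul (by norm_num : (0:ℝ) ≤ 4), sqrt_four]

/-- Key invariant: for `x` beyond the Gershgorin-type bound, consecutive Hermite values
satisfy `P_{m+1}(x) ≥ √(2(m+1))·P_m(x)` and are positive. -/
lemma hermite_aux (j : ℕ) (x : ℝ)
    (hx : Real.sqrt (((j:ℝ)-2)/2) + Real.sqrt (((j:ℝ)-1)/2) < x) :
    ∀ m : ℕ, m + 2 ≤ j → 0 < hermiteP m x ∧
      Real.sqrt (2*((m:ℝ)+1)) * hermiteP m x ≤ hermiteP (m+1) x := by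
  intro m
  induction m with
  | zero =>
    intro hm
    refine ⟨by norm_num [hermiteP], ?_⟩
    have hj2 : (2:ℝ) ≤ (j:ℝ) := by exact_mod_cast hm
    have h1 : Real.sqrt (1/2) ≤ Real.sqrt (((j:ℝ)-1)/2) := by
      apply Real.sqrt_le_sqrt; linarith
    have h2 : (0:ℝ) ≤ Real.sqrt (((j:ℝ)-2)/2) := Real.sqrt_nonneg _
    have hx2 : Real.sqrt (1/2) < x := by linarith
    have e : Real.sqrt 2 = 2 * Real.sqrt (1/2) := by
      rw [← sqrt_double]; norm_num
    have h3 : Real.sqrt 2 ≤ 2 * x := by rw [e]; linarith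
    show Real.sqrt (2*(((0:ℕ):ℝ)+1)) * hermiteP 0 x ≤ hermiteP 1 x
    simp only [hermiteP, Nat.cast_zero]
    norm_num
    linarith
  | succ m ih =>
    intro hm
    obtain ⟨h0, h1⟩ := ih (by omega)
    set s := Real.sqrt (2*((m:ℝ)+1)) with hs
    have hs0 : 0 < s := Real.sqrt_pos.2 (by positivity)
    have hP1 : 0 < hermiteP (m+1) x := lt_of_lt_of_le (by positivity) h1
    refine ⟨hP1, ?_⟩
    set t := Real.sqrt (2*((((m:ℕ):ℝ)+1)+1)) with ht
    have hsq : s^2 = 2*((m:ℝ)+1) := Real.sq_sqrt (by positivity)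
    have ht0 : 0 ≤ t := Real.sqrt_nonneg _
    have hjm : ((m:ℝ)+1) ≤ (j:ℝ) - 2 := by
      have : ((m:ℝ)) + 3 ≤ (j:ℝ) := by exact_mod_cast hm
      linarith
    have hsb : s ≤ 2 * Real.sqrt (((j:ℝ)-2)/2) := by
      rw [← sqrt_double]
      apply Real.sqrt_le_sqrt; linarith
    have htb : t ≤ 2 * Real.sqrt (((j:ℝ)-1)/2) := by
      rw [← sqrt_double]
      apply Real.sqrt_le_sqrt; linarith
    have hst : s + t ≤ 2 * x := by linarith
    have key : 2*((m:ℝ)+1) * hermiteP m x ≤ s * hermiteP (m+1) x := by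
      calc 2*((m:ℝ)+1) * hermiteP m x = s * (s * hermiteP m x) := by
            rw [← mul_assoc, ← sq, hsq]
        _ ≤ s * hermiteP (m+1) x := mul_le_mul_of_nonneg_left h1 hs0.le
    have hpos : 0 ≤ (2*x - s - t) * hermiteP (m+1) x :=
      mul_nonneg (by linarith) hP1.le
    show Real.sqrt (2*((↑(m+1):ℝ)+1)) * hermiteP (m+1) x ≤ hermiteP (m+1+1) x
    rw [hermiteP_rec]
    push_cast
    nlinarith [hpos, key, hP1]

/-- Beyond the bound `√((j−2)/2)+√((j−1)/2)`, the Hermite polynomial is positive. -/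
lemma hermiteP_pos (j : ℕ) (hj : 2 ≤ j) (x : ℝ)
    (hx : Real.sqrt (((j:ℝ)-2)/2) + Real.sqrt (((j:ℝ)-1)/2) < x) :
    0 < hermiteP j x := by
  obtain ⟨n, rfl⟩ : ∃ n, j = n + 2 := ⟨j - 2, by omega⟩
  obtain ⟨h0, h1⟩ := hermite_aux (n+2) x hx n le_rfl
  set s := Real.sqrt (2*((n:ℝ)+1)) with hs
  have hs0 : 0 < s := Real.sqrt_pos.2 (by positivity)
  have hsq : s^2 = 2*((n:ℝ)+1) := Real.sq_sqrt (by positivity)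
  have hP1 : 0 < hermiteP (n+1) x := lt_of_lt_of_le (by positivity) h1
  have hsb : s ≤ 2 * Real.sqrt (((↑(n+2):ℝ)-1)/2) := by
    rw [← sqrt_double]
    apply Real.sqrt_le_sqrt; push_cast; linarith
  have h2 : (0:ℝ) ≤ Real.sqrt (((↑(n+2):ℝ)-2)/2) := Real.sqrt_nonneg _
  have hsx : s < 2 * x := by
    have := Real.sqrt_nonneg (((↑(n+2):ℝ)-1)/2)
    linarith
  have key : 2*((n:ℝ)+1) * hermiteP n x ≤ s * hermiteP (n+1) x := by
    calc 2*((n:ℝ)+1) * hermiteP n x = s * (s * hermiteP n x) := by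
          rw [← mul_assoc, ← sq, hsq]
      _ ≤ s * hermiteP (n+1) x := mul_le_mul_of_nonneg_left h1 hs0.le
  rw [hermiteP_rec]
  nlinarith [mul_pos (show 0 < 2*x - s by linarith) hP1, key]

/-- Lemma `lemma:boundHermite`. Every real root `r` of the physicist's
Hermite polynomial `P_j` (`j ≥ 1`) satisfies `|r| ≤ √(2j−2)`; and for `j ≥ 2` the sharper
bound `|r| ≤ √((j−2)/2) + √((j−1)/2)` holds. -/
theorem hermite_root_bound (j : ℕ) (hj : 1 ≤ j) (r : ℝ) (hr : hermiteP j r = 0) :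
    |r| ≤ Real.sqrt (2 * (j : ℝ) - 2) ∧
    (2 ≤ j → |r| ≤ Real.sqrt (((j : ℝ) - 2) / 2) + Real.sqrt (((j : ℝ) - 1) / 2)) := by
  rcases eq_or_lt_of_le hj with h1 | h2
  · -- j = 1
    have hj1 : j = 1 := h1.symm
    subst hj1
    have : r = 0 := by
      have : 2 * r = 0 := hr
      linarith
    subst this
    constructor
    · simp [Real.sqrt_nonneg]
    · intro h; omega
  · -- j ≥ 2
    have hj2 : 2 ≤ j := h2
    -- |r| is also a root
    have habs : hermiteP j |r| = 0 := by
      rcases abs_cases r with ⟨h, _⟩ | ⟨h, _⟩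
      · rw [h]; exact hr
      · rw [h, hermiteP_neg, hr, mul_zero]
    have hB : |r| ≤ Real.sqrt (((j:ℝ)-2)/2) + Real.sqrt (((j:ℝ)-1)/2) := by
      by_contra hcon
      push_neg at hcon
      exact absurd habs (ne_of_gt (hermiteP_pos j hj2 _ hcon))
    have hBle : Real.sqrt (((j:ℝ)-2)/2) + Real.sqrt (((j:ℝ)-1)/2)
        ≤ Real.sqrt (2 * (j:ℝ) - 2) := by
      have e : Real.sqrt (2 * (j:ℝ) - 2) = 2 * Real.sqrt (((j:ℝ)-1)/2) := by
        rw [← sqrt_double]; ring_nf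
      have : Real.sqrt (((j:ℝ)-2)/2) ≤ Real.sqrt (((j:ℝ)-1)/2) := by
        apply Real.sqrt_le_sqrt; linarith
      rw [e]; linarith
    exact ⟨le_trans hB hBle, fun _ => hB⟩
end

section
/- Hadamard's variational formula in one dimension: let h > 0, let γ, β : ℝ → ℝ be smooth compactly supported functions, and set V(x) = x² + γ(x). Suppose ψ : ℝ × ℝ → ℝ is smooth, for each t ∈ ℝ the function ψ(t,·) is a real-valued Schwartz function with ∫_ℝ ψ(t,x)² dx = 1, the map t ↦ ψ(t,·) is differentiable as a map from ℝ into L²(ℝ) with derivative given by the pointwise partial derivative ∂ₜψ(t,·), which is also a Schwartz function for each t, and suppose E : ℝ → ℝ satisfies −h²·∂²ₓψ(t,x) + (V(x) + t·β(x))·ψ(t,x) = E(t)·ψ(t,x) for all t, x ∈ ℝ. Then E is differentiable and E'(t) = ∫_ℝ β(x)·ψ(t,x)² dx for every t ∈ ℝ. -/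
open MeasureTheory Set Filter

/-- The integral over `ℝ` of a derivative vanishes when the function tends to `0` at `±∞`. -/
lemma hadamard_aux_integral_deriv_eq_zero (f f' : ℝ → ℝ)
    (hd : ∀ x, HasDerivAt f (f' x) x) (hi : Integrable f' (volume : Measure ℝ))
    (ht : Tendsto f atTop (nhds 0)) (hb : Tendsto f atBot (nhds 0)) :
    ∫ x : ℝ, f' x = 0 := by
  rw [← intervalIntegral.integral_Iic_add_Ioi (b := (0:ℝ)) hi.integrableOn hi.integrableOn,
    MeasureTheory.integral_Ioi_of_hasDerivAt_of_tendsto' (fun x _ => hd x) hi.integrableOn ht,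
    MeasureTheory.integral_Iic_of_hasDerivAt_of_tendsto' (fun x _ => hd x) hi.integrableOn hb]
  ring

lemma hadamard_aux_schwartz_mul_integrable (f g : SchwartzMap ℝ ℝ) :
    Integrable (fun x => f x * g x) (volume : Measure ℝ) :=
  (g.integrable (μ := (volume : Measure ℝ))).bdd_mul f.continuous.aestronglyMeasurable
    (Filter.Eventually.of_forall fun x => f.norm_le_seminorm ℝ x)

lemma hadamard_aux_schwartz_tendsto_atTop (f : SchwartzMap ℝ ℝ) :
    Tendsto f atTop (nhds 0) :=
  (zero_at_infty f).mono_left atTop_le_cocompact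

lemma hadamard_aux_schwartz_tendsto_atBot (f : SchwartzMap ℝ ℝ) :
    Tendsto f atBot (nhds 0) :=
  (zero_at_infty f).mono_left atBot_le_cocompact

/-- Hadamard's variational formula in one dimension. Let `h > 0`,
`γ, β` smooth compactly supported, `V(x) = x² + γ(x)`.  Suppose `ψ : ℝ × ℝ → ℝ` is smooth,
each `ψ(t,·)` is a Schwartz function, `L²`-normalized, the map `t ↦ ψ(t,·)` is
differentiable as a map into `L²(ℝ)` with derivative the pointwise partial `t`-derivative
(itself Schwartz in `x` for each `t`), and
`−h²∂ₓ²ψ(t,x) + (V(x) + tβ(x))ψ(t,x) = E(t)ψ(t,x)`.  Then `E` is differentiable with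
`E'(t) = ∫ β(x) ψ(t,x)² dx`. -/
theorem hadamard_variational_formula
    (h : ℝ) (hh : 0 < h)
    (γ β : ℝ → ℝ)
    (hγ : ContDiff ℝ (⊤ : ℕ∞) γ) (hγc : HasCompactSupport γ)
    (hβ : ContDiff ℝ (⊤ : ℕ∞) β) (hβc : HasCompactSupport β)
    (V : ℝ → ℝ) (hV : ∀ x, V x = x ^ 2 + γ x)
    (ψ : ℝ → ℝ → ℝ) (E : ℝ → ℝ)
    (hsmooth : ContDiff ℝ (⊤ : ℕ∞) (Function.uncurry ψ))
    (hschwartz : ∀ t : ℝ, ∃ Ψ : SchwartzMap ℝ ℝ, ⇑Ψ = ψ t)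
    (hnorm : ∀ t : ℝ, (∫ x : ℝ, (ψ t x) ^ 2) = 1)
    (hschwartz' : ∀ t : ℝ, ∃ Φ : SchwartzMap ℝ ℝ,
      ⇑Φ = fun x => deriv (fun s => ψ s x) t)
    (hmem : ∀ t : ℝ, MemLp (ψ t) 2 (volume : Measure ℝ))
    (hmem' : ∀ t : ℝ, MemLp (fun x => deriv (fun s => ψ s x) t) 2 (volume : Measure ℝ))
    (hL2diff : ∀ t : ℝ, HasDerivAt (fun s => (hmem s).toLp (ψ s))
      ((hmem' t).toLp (fun x => deriv (fun s => ψ s x) t)) t)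
    (heq : ∀ t x : ℝ,
      -h ^ 2 * deriv (deriv (ψ t)) x + (V x + t * β x) * ψ t x = E t * ψ t x) :
    ∀ t : ℝ, HasDerivAt E (∫ x : ℝ, β x * (ψ t x) ^ 2) t := by
  intro t₀
  obtain ⟨Ψ₀, hΨ₀⟩ := hschwartz t₀
  -- the curve in L²
  set T : ℝ → Lp ℝ 2 (volume : Measure ℝ) := fun s => (hmem s).toLp (ψ s) with hTdef
  have hTcont : Continuous T := by
    rw [continuous_iff_continuousAt]
    exact fun s => (hL2diff s).continuousAt
  -- β·ψ(t₀) is in L²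
  have hcβ : Continuous fun x => β x * ψ t₀ x := by
    rw [← hΨ₀]; exact hβ.continuous.mul Ψ₀.continuous
  have hmemβ : MemLp (fun x => β x * ψ t₀ x) 2 (volume : Measure ℝ) :=
    hcβ.memLp_of_hasCompactSupport (hβc.mul_right)
  set c : Lp ℝ 2 (volume : Measure ℝ) := hmemβ.toLp _ with hcdef
  -- the two integrals as inner products
  set G : ℝ → ℝ := fun s => ∫ x : ℝ, ψ s x * ψ t₀ x with hGdef
  set I : ℝ → ℝ := fun s => ∫ x : ℝ, ψ s x * (β x * ψ t₀ x) with hIdef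
  have hG : ∀ s, (inner ℝ (T s) (T t₀) : ℝ) = G s := by
    intro s
    rw [MeasureTheory.L2.inner_def]
    refine integral_congr_ae ?_
    filter_upwards [(hmem s).coeFn_toLp, (hmem t₀).coeFn_toLp] with x h1 h2
    simp [hTdef, h1, h2, RCLike.inner_apply, starRingEnd_apply]
    ring
  have hI : ∀ s, (inner ℝ (T s) c : ℝ) = I s := by
    intro s
    rw [MeasureTheory.L2.inner_def]
    refine integral_congr_ae ?_
    filter_upwards [(hmem s).coeFn_toLp, hmemβ.coeFn_toLp] with x h1 h2
    simp [hTdef, hcdef, h1, h2, RCLike.inner_apply, starRingEnd_apply]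
    ring
  have hGcont : Continuous G := by
    have : Continuous fun s => (inner ℝ (T s) (T t₀) : ℝ) :=
      hTcont.inner continuous_const
    simpa [funext hG] using this
  have hIcont : Continuous I := by
    have : Continuous fun s => (inner ℝ (T s) c : ℝ) := hTcont.inner continuous_const
    simpa [funext hI] using this
  have hG0 : G t₀ = 1 := by
    have : G t₀ = ∫ x : ℝ, (ψ t₀ x) ^ 2 := by
      simp only [hGdef]
      congr 1
      funext x
      ring
    rw [this, hnorm t₀]
  -- the key algebraic identity
  have key : ∀ s, (E s - E t₀) * G s = (s - t₀) * I s := by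
    intro s
    obtain ⟨Ψ, hΨ⟩ := hschwartz s
    have hfC : ContDiff ℝ ((⊤:ℕ∞):WithTop ℕ∞) (ψ s) := hΨ ▸ Ψ.smooth ⊤
    have hgC : ContDiff ℝ ((⊤:ℕ∞):WithTop ℕ∞) (ψ t₀) := hΨ₀ ▸ Ψ₀.smooth ⊤
    have hfC' : ContDiff ℝ ((⊤:ℕ∞):WithTop ℕ∞) (deriv (ψ s)) := (contDiff_infty_iff_deriv.mp hfC).2
    have hgC' : ContDiff ℝ ((⊤:ℕ∞):WithTop ℕ∞) (deriv (ψ t₀)) := (contDiff_infty_iff_deriv.mp hgC).2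
    have hfd : ∀ x, HasDerivAt (ψ s) (deriv (ψ s) x) x := fun x =>
      (hfC.differentiable (by simp) x).hasDerivAt
    have hgd : ∀ x, HasDerivAt (ψ t₀) (deriv (ψ t₀) x) x := fun x =>
      (hgC.differentiable (by simp) x).hasDerivAt
    have hfd2 : ∀ x, HasDerivAt (deriv (ψ s)) (deriv (deriv (ψ s)) x) x := fun x =>
      (hfC'.differentiable (by simp) x).hasDerivAt
    have hgd2 : ∀ x, HasDerivAt (deriv (ψ t₀)) (deriv (deriv (ψ t₀)) x) x := fun x =>
      (hgC'.differentiable (by simp) x).hasDerivAt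
    -- the Wronskian
    set W : ℝ → ℝ := fun x => deriv (ψ s) x * ψ t₀ x - deriv (ψ t₀) x * ψ s x with hWdef
    set W' : ℝ → ℝ := fun x =>
      deriv (deriv (ψ s)) x * ψ t₀ x - deriv (deriv (ψ t₀)) x * ψ s x with hW'def
    have hW : ∀ x, HasDerivAt W (W' x) x := by
      intro x
      have H : HasDerivAt W _ x := ((hfd2 x).mul (hgd x)).sub ((hgd2 x).mul (hfd x))
      convert H using 1
      show deriv (deriv (ψ s)) x * ψ t₀ x - deriv (deriv (ψ t₀)) x * ψ s x = _
      ring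
    -- Schwartz coercions
    have hcΨ' : ⇑(SchwartzMap.derivCLM ℝ ℝ Ψ) = deriv (ψ s) := by
      funext x; rw [SchwartzMap.derivCLM_apply, hΨ]
    have hcΨ'' : ⇑(SchwartzMap.derivCLM ℝ ℝ (SchwartzMap.derivCLM ℝ ℝ Ψ)) =
        deriv (deriv (ψ s)) := by
      funext x; rw [SchwartzMap.derivCLM_apply, hcΨ']
    have hcΨ₀' : ⇑(SchwartzMap.derivCLM ℝ ℝ Ψ₀) = deriv (ψ t₀) := by
      funext x; rw [SchwartzMap.derivCLM_apply, hΨ₀]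
    have hcΨ₀'' : ⇑(SchwartzMap.derivCLM ℝ ℝ (SchwartzMap.derivCLM ℝ ℝ Ψ₀)) =
        deriv (deriv (ψ t₀)) := by
      funext x; rw [SchwartzMap.derivCLM_apply, hcΨ₀']
    -- integrability
    have intfg : Integrable (fun x => ψ s x * ψ t₀ x) (volume : Measure ℝ) := by
      have := hadamard_aux_schwartz_mul_integrable Ψ Ψ₀
      simpa [hΨ, hΨ₀] using this
    have intW' : Integrable W' (volume : Measure ℝ) := by
      have h1 := hadamard_aux_schwartz_mul_integrable
        (SchwartzMap.derivCLM ℝ ℝ (SchwartzMap.derivCLM ℝ ℝ Ψ)) Ψ₀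
      have h2 := hadamard_aux_schwartz_mul_integrable
        (SchwartzMap.derivCLM ℝ ℝ (SchwartzMap.derivCLM ℝ ℝ Ψ₀)) Ψ
      rw [hcΨ'', hΨ₀] at h1
      rw [hcΨ₀'', hΨ] at h2
      simpa [hW'def, Pi.sub_def] using h1.sub h2
    have intβfg : Integrable (fun x => ψ s x * (β x * ψ t₀ x)) (volume : Measure ℝ) := by
      have heqf : (fun x => ψ s x * (β x * ψ t₀ x)) =
          fun x => β x * (ψ s x * ψ t₀ x) := by funext x; ring
      rw [heqf]
      obtain ⟨C, hC⟩ := hβc.exists_bound_of_continuous hβ.continuous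
      exact intfg.bdd_mul hβ.continuous.aestronglyMeasurable (Filter.Eventually.of_forall hC)
    -- limits of W at infinity
    have hWtop : Tendsto W atTop (nhds 0) := by
      have h1 := (hadamard_aux_schwartz_tendsto_atTop (SchwartzMap.derivCLM ℝ ℝ Ψ)).mul
        (hadamard_aux_schwartz_tendsto_atTop Ψ₀)
      have h2 := (hadamard_aux_schwartz_tendsto_atTop (SchwartzMap.derivCLM ℝ ℝ Ψ₀)).mul
        (hadamard_aux_schwartz_tendsto_atTop Ψ)
      rw [hcΨ', hΨ₀] at h1
      rw [hcΨ₀', hΨ] at h2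
      simpa [hWdef] using h1.sub h2
    have hWbot : Tendsto W atBot (nhds 0) := by
      have h1 := (hadamard_aux_schwartz_tendsto_atBot (SchwartzMap.derivCLM ℝ ℝ Ψ)).mul
        (hadamard_aux_schwartz_tendsto_atBot Ψ₀)
      have h2 := (hadamard_aux_schwartz_tendsto_atBot (SchwartzMap.derivCLM ℝ ℝ Ψ₀)).mul
        (hadamard_aux_schwartz_tendsto_atBot Ψ)
      rw [hcΨ', hΨ₀] at h1
      rw [hcΨ₀', hΨ] at h2
      simpa [hWdef] using h1.sub h2
    have hintW'zero : ∫ x : ℝ, W' x = 0 :=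
      hadamard_aux_integral_deriv_eq_zero W W' hW intW' hWtop hWbot
    -- the pointwise identity
    have hpt : ∀ x, (E s - E t₀) * (ψ s x * ψ t₀ x) =
        -h ^ 2 * W' x + (s - t₀) * (ψ s x * (β x * ψ t₀ x)) := by
      intro x
      have h1 := heq s x
      have h2 := heq t₀ x
      simp only [hW'def]
      linear_combination (ψ s x) * h2 - (ψ t₀ x) * h1
    -- integrate
    calc (E s - E t₀) * G s = ∫ x : ℝ, (E s - E t₀) * (ψ s x * ψ t₀ x) := by
          rw [hGdef]; exact (integral_const_mul _ _).symm
      _ = ∫ x : ℝ, (-h ^ 2 * W' x + (s - t₀) * (ψ s x * (β x * ψ t₀ x))) := by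
          exact integral_congr_ae (Filter.Eventually.of_forall hpt)
      _ = -h ^ 2 * (∫ x : ℝ, W' x) + (s - t₀) * I s := by
          rw [integral_add (intW'.const_mul _) (intβfg.const_mul _),
            integral_const_mul, integral_const_mul]
      _ = (s - t₀) * I s := by rw [hintW'zero]; ring
  -- conclude via slope
  have hI0 : I t₀ = ∫ x : ℝ, β x * (ψ t₀ x) ^ 2 := by
    simp only [hIdef]
    congr 1
    funext x
    ring
  have hGne : ∀ᶠ s in nhds t₀, G s ≠ 0 := by
    have : G t₀ ≠ 0 := by rw [hG0]; norm_num
    exact hGcont.continuousAt.eventually_ne this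
  rw [hasDerivAt_iff_tendsto_slope]
  have hq : Tendsto (fun s => I s / G s) (nhdsWithin t₀ {t₀}ᶜ)
      (nhds (∫ x : ℝ, β x * (ψ t₀ x) ^ 2)) := by
    have hc : ContinuousAt (fun s => I s / G s) t₀ :=
      hIcont.continuousAt.div hGcont.continuousAt (by rw [hG0]; norm_num)
    have : I t₀ / G t₀ = ∫ x : ℝ, β x * (ψ t₀ x) ^ 2 := by
      rw [hG0, hI0, div_one]
    rw [← this]
    exact hc.continuousWithinAt.tendsto
  refine hq.congr' ?_
  filter_upwards [self_mem_nhdsWithin, hGne.filter_mono nhdsWithin_le_nhds] with s hs hGs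
  have hst : s - t₀ ≠ 0 := sub_ne_zero.mpr hs
  rw [slope_def_field, div_eq_div_iff hGs hst]
  linear_combination -(key s)
end

section
/- Agmon conjugation identity: let h > 0, E ∈ ℝ, let V : ℝ → ℝ be continuous, let φ : ℝ → ℝ be twice continuously differentiable, and let ψ : ℝ → ℝ be smooth with compact support. Then ∫_ℝ e^{φ(x)/h}·ψ(x)·[ −h²·(d²/dx²)(e^{−φ(x)/h}ψ(x)) + (V(x) − E)·e^{−φ(x)/h}ψ(x) ] dx = ∫_ℝ [ h²·ψ'(x)² − φ'(x)²·ψ(x)² + (V(x) − E)·ψ(x)² ] dx. -/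
open MeasureTheory Filter Set Topology

/-- Agmon conjugation identity. For `h > 0`, `E ∈ ℝ`, `V` continuous,
`φ` of class `C²`, and `ψ` smooth with compact support,
`∫ e^{φ/h} ψ [−h² (e^{−φ/h}ψ)'' + (V − E) e^{−φ/h}ψ]
  = ∫ [h² (ψ')² − (φ')² ψ² + (V − E) ψ²]`. -/
theorem agmon_conjugation_identity
    (h E : ℝ) (hh : 0 < h)
    (V : ℝ → ℝ) (hV : Continuous V)
    (φ : ℝ → ℝ) (hφ : ContDiff ℝ 2 φ)
    (ψ : ℝ → ℝ) (hψ : ContDiff ℝ (⊤ : ℕ∞) ψ) (hψc : HasCompactSupport ψ) :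
    (∫ x : ℝ, Real.exp (φ x / h) * ψ x *
        (-h ^ 2 * deriv (deriv (fun y => Real.exp (-φ y / h) * ψ y)) x
          + (V x - E) * (Real.exp (-φ x / h) * ψ x)))
      = ∫ x : ℝ, h ^ 2 * (deriv ψ x) ^ 2 - (deriv φ x) ^ 2 * (ψ x) ^ 2
          + (V x - E) * (ψ x) ^ 2 := by
  have hh0 : h ≠ 0 := ne_of_gt hh
  -- differentiability facts
  have hφ1 : Differentiable ℝ φ := hφ.differentiable (by norm_num)
  have hφd : ContDiff ℝ 1 (deriv φ) := (contDiff_succ_iff_deriv.mp (show ContDiff ℝ (1+1) φ by norm_num [hφ])).2.2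
  have hφ'1 : Differentiable ℝ (deriv φ) := hφd.differentiable one_ne_zero
  have hφ''c : Continuous (deriv (deriv φ)) := hφd.continuous_deriv le_rfl
  have hψ1 : Differentiable ℝ ψ := hψ.differentiable (by simp)
  have hψd : ContDiff ℝ 2 (deriv ψ) :=
    (contDiff_succ_iff_deriv.mp (show ContDiff ℝ (2+1) ψ from hψ.of_le (le_trans (by norm_num : (2+1 : WithTop ℕ∞) ≤ ((3:ℕ∞) : WithTop ℕ∞)) (WithTop.coe_le_coe.mpr le_top)))).2.2
  have hψ'1 : Differentiable ℝ (deriv ψ) := hψd.differentiable (by norm_num)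
  have hψ''c : Continuous (deriv (deriv ψ)) := hψd.continuous_deriv (by norm_num)
  -- first derivative of the conjugated function
  have hg : ∀ x : ℝ, HasDerivAt (fun y => Real.exp (-φ y / h) * ψ y)
      (Real.exp (-φ x / h) * (deriv ψ x - deriv φ x * ψ x / h)) x := by
    intro x
    have h1 : HasDerivAt (fun y => -φ y / h) (-(deriv φ x) / h) x :=
      ((hφ1 x).hasDerivAt.neg).div_const h
    have he : HasDerivAt (fun y => Real.exp (-φ y / h))
        (Real.exp (-φ x / h) * (-(deriv φ x) / h)) x := h1.exp
    have := he.fun_mul (hψ1 x).hasDerivAt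
    refine this.congr_deriv ?_
    ring
  have hderivg : deriv (fun y => Real.exp (-φ y / h) * ψ y)
      = fun x => Real.exp (-φ x / h) * (deriv ψ x - deriv φ x * ψ x / h) :=
    funext fun x => (hg x).deriv
  -- second derivative
  have hg2 : ∀ x : ℝ, deriv (deriv (fun y => Real.exp (-φ y / h) * ψ y)) x
      = Real.exp (-φ x / h) * (-(deriv φ x) / h * (deriv ψ x - deriv φ x * ψ x / h)
          + (deriv (deriv ψ) x
            - (deriv (deriv φ) x * ψ x + deriv φ x * deriv ψ x) / h)) := by
    intro x
    rw [hderivg]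
    have h1 : HasDerivAt (fun y => -φ y / h) (-(deriv φ x) / h) x :=
      ((hφ1 x).hasDerivAt.neg).div_const h
    have he : HasDerivAt (fun y => Real.exp (-φ y / h))
        (Real.exp (-φ x / h) * (-(deriv φ x) / h)) x := h1.exp
    have hw : HasDerivAt (fun y => deriv ψ y - deriv φ y * ψ y / h)
        (deriv (deriv ψ) x - (deriv (deriv φ) x * ψ x + deriv φ x * deriv ψ x) / h) x :=
      (hψ'1 x).hasDerivAt.sub (((hφ'1 x).hasDerivAt.mul (hψ1 x).hasDerivAt).div_const h)
    have := (he.fun_mul hw).deriv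
    rw [this]; ring
  -- the boundary-term function and its derivative
  set F : ℝ → ℝ := fun x => -h ^ 2 * (ψ x * deriv ψ x) + h * (deriv φ x * ψ x ^ 2) with hF
  set F' : ℝ → ℝ := fun x => -h ^ 2 * (deriv ψ x ^ 2 + ψ x * deriv (deriv ψ) x)
      + h * (deriv (deriv φ) x * ψ x ^ 2 + deriv φ x * (2 * ψ x * deriv ψ x)) with hF'
  have hFd : ∀ x : ℝ, HasDerivAt F (F' x) x := by
    intro x
    have h1 := (hψ1 x).hasDerivAt.fun_mul (hψ'1 x).hasDerivAt
    have h2 := (hψ1 x).hasDerivAt.fun_pow 2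
    have h3 := (hφ'1 x).hasDerivAt.fun_mul h2
    have h4 := (h1.const_mul (-h ^ 2)).fun_add (h3.const_mul h)
    refine h4.congr_deriv ?_
    simp only [hF']
    push_cast
    ring
  -- pointwise identity: LHS integrand = RHS integrand + F'
  have key : ∀ x : ℝ,
      Real.exp (φ x / h) * ψ x *
        (-h ^ 2 * deriv (deriv (fun y => Real.exp (-φ y / h) * ψ y)) x
          + (V x - E) * (Real.exp (-φ x / h) * ψ x))
      = (h ^ 2 * (deriv ψ x) ^ 2 - (deriv φ x) ^ 2 * (ψ x) ^ 2
          + (V x - E) * (ψ x) ^ 2) + F' x := by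
    intro x
    rw [hg2 x]
    have e1 : Real.exp (-φ x / h) = (Real.exp (φ x / h))⁻¹ := by
      rw [← Real.exp_neg, neg_div]
    rw [e1]
    have hE := Real.exp_ne_zero (φ x / h)
    field_simp [hF']
    ring
  -- integrability
  have hsupp : ∀ x : ℝ, x ∉ tsupport ψ → ψ x = 0 ∧ deriv ψ x = 0 ∧ deriv (deriv ψ) x = 0 := by
    intro x hx
    have h0 : ψ x = 0 := image_eq_zero_of_notMem_tsupport hx
    have h1 : deriv ψ x = 0 := by
      by_contra hc
      exact hx (support_deriv_subset hc)
    have h2 : deriv (deriv ψ) x = 0 := by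
      by_contra hc
      have h2' : x ∈ tsupport (deriv ψ) := support_deriv_subset hc
      exact hx (closure_minimal support_deriv_subset (isClosed_tsupport ψ) h2')
    exact ⟨h0, h1, h2⟩
  have hRHSc : Continuous (fun x => h ^ 2 * (deriv ψ x) ^ 2 - (deriv φ x) ^ 2 * (ψ x) ^ 2
      + (V x - E) * (ψ x) ^ 2) := by
    fun_prop
  have hRHSsupp : HasCompactSupport (fun x => h ^ 2 * (deriv ψ x) ^ 2
      - (deriv φ x) ^ 2 * (ψ x) ^ 2 + (V x - E) * (ψ x) ^ 2) := by
    apply HasCompactSupport.intro hψc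
    intro x hx
    obtain ⟨h0, h1, _⟩ := hsupp x hx
    simp [h0, h1]
  have hRHSint : Integrable (fun x => h ^ 2 * (deriv ψ x) ^ 2 - (deriv φ x) ^ 2 * (ψ x) ^ 2
      + (V x - E) * (ψ x) ^ 2) := hRHSc.integrable_of_hasCompactSupport hRHSsupp
  have hF'c : Continuous F' := by
    rw [hF']; fun_prop
  have hF'supp : HasCompactSupport F' := by
    apply HasCompactSupport.intro hψc
    intro x hx
    obtain ⟨h0, h1, h2⟩ := hsupp x hx
    simp [hF', h0, h1, h2]
  have hF'int : Integrable F' := hF'c.integrable_of_hasCompactSupport hF'supp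
  have hFsupp : HasCompactSupport F := by
    apply HasCompactSupport.intro hψc
    intro x hx
    obtain ⟨h0, h1, _⟩ := hsupp x hx
    simp [hF, h0, h1]
  have hle1 : (atTop : Filter ℝ) ≤ cocompact ℝ := by
    rw [cocompact_eq_atBot_atTop]; exact le_sup_right
  have hle2 : (atBot : Filter ℝ) ≤ cocompact ℝ := by
    rw [cocompact_eq_atBot_atTop]; exact le_sup_left
  have hFzero : Tendsto F atTop (𝓝 0) := hFsupp.is_zero_at_infty.mono_left hle1
  have hFzero' : Tendsto F atBot (𝓝 0) := hFsupp.is_zero_at_infty.mono_left hle2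
  have hintF' : ∫ x : ℝ, F' x = 0 := by
    have := integral_of_hasDerivAt_of_tendsto hFd hF'int hFzero' hFzero
    simpa using this
  calc (∫ x : ℝ, Real.exp (φ x / h) * ψ x *
        (-h ^ 2 * deriv (deriv (fun y => Real.exp (-φ y / h) * ψ y)) x
          + (V x - E) * (Real.exp (-φ x / h) * ψ x)))
      = ∫ x : ℝ, (h ^ 2 * (deriv ψ x) ^ 2 - (deriv φ x) ^ 2 * (ψ x) ^ 2
          + (V x - E) * (ψ x) ^ 2) + F' x := by
        exact integral_congr_ae (Filter.Eventually.of_forall key)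
    _ = (∫ x : ℝ, h ^ 2 * (deriv ψ x) ^ 2 - (deriv φ x) ^ 2 * (ψ x) ^ 2
          + (V x - E) * (ψ x) ^ 2) + ∫ x : ℝ, F' x := integral_add hRHSint hF'int
    _ = ∫ x : ℝ, h ^ 2 * (deriv ψ x) ^ 2 - (deriv φ x) ^ 2 * (ψ x) ^ 2
          + (V x - E) * (ψ x) ^ 2 := by rw [hintF', add_zero]
end

section
/- Let α, β : ℝ → ℝ be continuous nonnegative functions with supp(α) ⊆ (1,2) and supp(β) ⊆ (3,4), and suppose α is not identically zero. Then there exists δ₀ ∈ (0,1) such that for all δ ∈ (0,δ₀], all s ∈ [0,1], and all x ∈ [3,4]: ∫₀ˣ [ (1−δ)²·√(a² + α(a) + s·β(a)) − (1+δ)²·√(a² + s·β(a)) ] da > 0. -/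
/-!
The supports of `α` and `β` are disjoint, so pointwise
`√(a² + α + sβ) - √(a² + sβ) = √(a² + α) - |a|`, independently of `s`. Hence the difference of
the two Agmon distances is at least the fixed positive number `c = ∫₀³ (√(a² + α) - |a|)`,
while the second distance is bounded by `M = ∫₀⁴ √(a² + β)`. Writing
`(1-δ)²F - (1+δ)²G = (1-δ)²(F - G) - 4δG ≥ (1-δ)²c - 4δM`, any `δ ≤ min (1/2) (c / 16(M+1))`
works.
-/

open Set

lemma eq_zero_or_eq_zero_of_disjoint_tsupport {X M : Type*} [TopologicalSpace X] [Zero M]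
    {f g : X → M} (h : Disjoint (tsupport f) (tsupport g)) (x : X) : f x = 0 ∨ g x = 0 := by
  by_contra! hfg
  exact h.ne_of_mem (subset_tsupport f hfg.1) (subset_tsupport g hfg.2) rfl

lemma sqrt_add_add_sub_sqrt_add (u : ℝ) {v w : ℝ} (h : v = 0 ∨ w = 0) :
    √(u + v + w) - √(u + w) = √(u + v) - √u := by
  rcases h with rfl | rfl <;> simp

lemma exists_forall_sq_mul_sub_sq_mul_pos {c M : ℝ} (hc : 0 < c) (hM : 0 ≤ M) :
    ∃ δ₀ ∈ Ioo (0 : ℝ) 1, ∀ δ ∈ Ioc (0 : ℝ) δ₀, ∀ F G : ℝ, c ≤ F - G → G ≤ M →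
      0 < (1 - δ) ^ 2 * F - (1 + δ) ^ 2 * G := by
  refine ⟨min (1 / 2) (c / (16 * (M + 1))),
    ⟨lt_min (by norm_num) (by positivity), (min_le_left _ _).trans_lt (by norm_num)⟩, ?_⟩
  rintro δ ⟨hδ, hδ₀⟩ F G hFG hGM
  have hδ_half : δ ≤ 1 / 2 := hδ₀.trans (min_le_left _ _)
  have hδ_c : 16 * (M + 1) * δ ≤ c := by
    have := hδ₀.trans (min_le_right _ _)
    rw [le_div_iff₀ (by positivity)] at this
    linarith
  have hquarter : 1 / 4 * c ≤ (1 - δ) ^ 2 * c :=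
    mul_le_mul_of_nonneg_right (by nlinarith) hc.le
  calc 0 < (1 - δ) ^ 2 * c - 4 * δ * M := by linarith
    _ ≤ (1 - δ) ^ 2 * (F - G) - 4 * δ * G := by gcongr
    _ = (1 - δ) ^ 2 * F - (1 + δ) ^ 2 * G := by ring

section SqrtIntegrals

variable {u w : ℝ → ℝ} (hu : Continuous u) (hw : Continuous w) (hw_nonneg : ∀ x, 0 ≤ w x)
include hu hw hw_nonneg

lemma integral_sqrt_add_sub_sqrt_pos (hu_nonneg : ∀ x, 0 ≤ u x) {a b x₀ : ℝ} (hab : a < b)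
    (hx₀ : x₀ ∈ Icc a b) (hw₀ : w x₀ ≠ 0) :
    0 < ∫ x in a..b, (√(u x + w x) - √(u x)) := by
  refine intervalIntegral.integral_pos hab (by fun_prop)
    (fun x _ => sub_nonneg.2 (Real.sqrt_le_sqrt (by linarith [hw_nonneg x]))) ⟨x₀, hx₀, ?_⟩
  have := (hw_nonneg x₀).lt_of_ne' hw₀
  exact sub_pos.2 (Real.sqrt_lt_sqrt (hu_nonneg x₀) (by linarith))

lemma integral_sqrt_add_mul_le {s a x b : ℝ} (hs : s ≤ 1) (hax : a ≤ x)
    (hxb : x ≤ b) :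
    ∫ y in a..x, √(u y + s * w y) ≤ ∫ y in a..b, √(u y + w y) :=
  calc ∫ y in a..x, √(u y + s * w y)
      ≤ ∫ y in a..b, √(u y + s * w y) :=
        intervalIntegral.integral_mono_interval le_rfl hax hxb
          (Filter.Eventually.of_forall fun _ => Real.sqrt_nonneg _)
          (Continuous.intervalIntegrable (by fun_prop) _ _)
    _ ≤ ∫ y in a..b, √(u y + w y) :=
        intervalIntegral.integral_mono_on (hax.trans hxb)
          (Continuous.intervalIntegrable (by fun_prop) _ _)
          (Continuous.intervalIntegrable (by fun_prop) _ _)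
          fun y _ => Real.sqrt_le_sqrt (by nlinarith [hw_nonneg y])

end SqrtIntegrals

/-- Let `α, β` be continuous nonnegative functions with
`supp α ⊆ (1,2)`, `supp β ⊆ (3,4)`, and `α` not identically zero.  Then there is
`δ₀ ∈ (0,1)` such that for all `δ ∈ (0,δ₀]`, `s ∈ [0,1]`, and `x ∈ [3,4]`,
`∫₀ˣ [(1−δ)²√(a² + α(a) + sβ(a)) − (1+δ)²√(a² + sβ(a))] da > 0`. -/
theorem agmon_distance_gap
    (α β : ℝ → ℝ)
    (hα : Continuous α) (hβ : Continuous β)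
    (hαnn : ∀ x, 0 ≤ α x) (hβnn : ∀ x, 0 ≤ β x)
    (hαsupp : tsupport α ⊆ Set.Ioo 1 2) (hβsupp : tsupport β ⊆ Set.Ioo 3 4)
    (hαne : α ≠ 0) :
    ∃ δ₀ : ℝ, δ₀ ∈ Set.Ioo (0 : ℝ) 1 ∧
      ∀ δ ∈ Set.Ioc (0 : ℝ) δ₀, ∀ s ∈ Set.Icc (0 : ℝ) 1, ∀ x ∈ Set.Icc (3 : ℝ) 4,
        0 < ∫ a in (0 : ℝ)..x,
          ((1 - δ) ^ 2 * Real.sqrt (a ^ 2 + α a + s * β a)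
            - (1 + δ) ^ 2 * Real.sqrt (a ^ 2 + s * β a)) := by
  have hsq : Continuous fun a : ℝ => a ^ 2 := by fun_prop
  have hdisj : ∀ a, α a = 0 ∨ β a = 0 := eq_zero_or_eq_zero_of_disjoint_tsupport <|
    (disjoint_left.2 fun a h₁ h₂ => by linarith [h₁.2, h₂.1]).mono hαsupp hβsupp
  have hc : 0 < ∫ a in (0 : ℝ)..3, (√(a ^ 2 + α a) - √(a ^ 2)) := by
    obtain ⟨a₀, ha₀⟩ := Function.ne_iff.1 hαne
    have ha₀_mem := hαsupp (subset_tsupport α ha₀)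
    exact integral_sqrt_add_sub_sqrt_pos hsq hα hαnn sq_nonneg (by norm_num)
      ⟨by linarith [ha₀_mem.1], by linarith [ha₀_mem.2]⟩ ha₀
  obtain ⟨δ₀, hδ₀, hδ₀_spec⟩ := exists_forall_sq_mul_sub_sq_mul_pos hc
    (intervalIntegral.integral_nonneg (by norm_num : (0 : ℝ) ≤ 4) fun a _ => Real.sqrt_nonneg (a ^ 2 + β a))
  refine ⟨δ₀, hδ₀, fun δ hδ s ⟨_, hs₁⟩ x ⟨hx₃, hx₄⟩ => ?_⟩
  have hF : IntervalIntegrable (fun a => √(a ^ 2 + α a + s * β a)) MeasureTheory.volume 0 x :=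
    Continuous.intervalIntegrable (by fun_prop) _ _
  have hG : IntervalIntegrable (fun a => √(a ^ 2 + s * β a)) MeasureTheory.volume 0 x :=
    Continuous.intervalIntegrable (by fun_prop) _ _
  rw [intervalIntegral.integral_sub (hF.const_mul _) (hG.const_mul _),
    intervalIntegral.integral_const_mul, intervalIntegral.integral_const_mul]
  refine hδ₀_spec δ hδ _ _ ?_ (integral_sqrt_add_mul_le hsq hβ hβnn hs₁ (by linarith) hx₄)
  rw [← intervalIntegral.integral_sub hF hG, intervalIntegral.integral_congr fun a _ =>
    sqrt_add_add_sub_sqrt_add _ ((hdisj a).imp_right fun h => by rw [h, mul_zero])]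
  exact intervalIntegral.integral_mono_interval le_rfl (by norm_num) hx₃
    (Filter.Eventually.of_forall fun a =>
      sub_nonneg.2 (Real.sqrt_le_sqrt (by linarith [hαnn a])))
    (Continuous.intervalIntegrable (by fun_prop) _ _)
end
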